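/- Let I ⊂ ℝ be a bounded interval, let ψ̄ : I → (0,∞) be a reference curve, i.e. ψ̄(x) = 2A cos x + (c + x)^(1/γ) for some c > 0, and let ψ : I → (0,∞) be a smooth function such that ψ(x*) = ψ̄(x*) for some x* ∈ I. Define Δm = sup_{x∈I} |ψ'(x) − m₁(x, ψ(x))|, where m₁(x,y) = −2A sin x + 1/Y'(y − 2A cos x). Then, provided γ > 1 and inf_{x∈I} min(ψ(x), ψ̄(x)) is sufficiently large (depending on A, γ and |I|), one has |ψ(x) − ψ̄(x)| ≤ 2·Δm·|x − x*| for every x ∈ I. -/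

import Mathlib

open Set Real

noncomputable section

/-- The slope field `m₁(x,y) = −2A sin x + 1/Y'(y − 2A cos x)`, where `Y'(y) = γ y^(γ−1)`. -/
def slopeField (A γ x y : ℝ) : ℝ :=
  -2 * A * Real.sin x + 1 / (γ * (y - 2 * A * Real.cos x) ^ (γ - 1))

/-- The reference curve `ψ̄(x) = 2A cos x + (c + x)^(1/γ)`. -/
def refPsi (A γ c x : ℝ) : ℝ := 2 * A * Real.cos x + (c + x) ^ (1 / γ)

/-! ### Auxiliary lemmas -/

lemma exp_le_one_add_two_mul' {s : ℝ} (h0 : 0 ≤ s) (h1 : s ≤ 1) : Real.exp s ≤ 1 + 2 * s := by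
  have := convexOn_exp.2 (mem_univ (0:ℝ)) (mem_univ (1:ℝ)) (by linarith : (0:ℝ) ≤ 1 - s) h0 (by ring)
  simp only [smul_eq_mul, mul_zero, mul_one, zero_add, Real.exp_zero] at this
  have he : Real.exp 1 < 2.7182818286 := Real.exp_one_lt_d9
  nlinarith [this]

lemma gronwallBound_le_two_mul' {K ε t : ℝ} (hK : 0 ≤ K) (hε : 0 ≤ ε) (ht : 0 ≤ t)
    (hKt : K * t ≤ 1) : gronwallBound 0 K ε t ≤ 2 * ε * t := by
  rcases eq_or_lt_of_le hK with hK0 | hKpos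
  · rw [← hK0, gronwallBound_K0]; show (0:ℝ) + ε * t ≤ 2 * ε * t; nlinarith
  · rw [gronwallBound_of_K_ne_0 hKpos.ne']
    have h := exp_le_one_add_two_mul' (mul_nonneg hK ht) hKt
    have : ε / K * (Real.exp (K * t) - 1) ≤ ε / K * (2 * (K * t)) := by
      apply mul_le_mul_of_nonneg_left (by linarith) (div_nonneg hε hK)
    calc 0 * Real.exp (K * t) + ε / K * (Real.exp (K * t) - 1) = ε / K * (Real.exp (K * t) - 1) := by ring
    _ ≤ ε / K * (2 * (K * t)) := this
    _ = 2 * ε * t := by field_simp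

lemma gron_right' {g g' : ℝ → ℝ} {s t L ε : ℝ}
    (hg : ContinuousOn g (Icc s t))
    (hd : ∀ x ∈ Ico s t, HasDerivWithinAt g (g' x) (Ici x) x)
    (h0 : g s = 0)
    (hb : ∀ x ∈ Ico s t, |g' x| ≤ L * |g x| + ε)
    (hL : 0 ≤ L) (hε : 0 ≤ ε) (hLt : L * (t - s) ≤ 1) :
    ∀ x ∈ Icc s t, |g x| ≤ 2 * ε * (x - s) := by
  intro x hx
  have h0' : ‖g s‖ ≤ (0:ℝ) := by rw [h0]; simp
  have h := norm_le_gronwallBound_of_norm_deriv_right_le (δ := 0) hg hd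
    h0' (fun y hy => by simpa [Real.norm_eq_abs] using hb y hy) x hx
  rw [Real.norm_eq_abs] at h
  refine h.trans (gronwallBound_le_two_mul' hL hε (by linarith [hx.1]) ?_)
  have : x - s ≤ t - s := by linarith [hx.2]
  nlinarith [mul_le_mul_of_nonneg_left this hL]

lemma gron_two_sided' {g g' : ℝ → ℝ} {a b xs L ε : ℝ} (hxs : xs ∈ Icc a b)
    (hg : ContinuousOn g (Icc a b))
    (hd : ∀ x ∈ Icc a b, HasDerivWithinAt g (g' x) (Icc a b) x)
    (h0 : g xs = 0)
    (hb : ∀ x ∈ Icc a b, |g' x| ≤ L * |g x| + ε)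
    (hL : 0 ≤ L) (hε : 0 ≤ ε) (hLt : L * (b - a) ≤ 1) :
    ∀ x ∈ Icc a b, |g x| ≤ 2 * ε * |x - xs| := by
  intro x hx
  rcases le_total xs x with hle | hle
  · have key : ∀ y ∈ Icc xs b, |g y| ≤ 2 * ε * (y - xs) := by
      apply gron_right' (hg.mono (Icc_subset_Icc hxs.1 le_rfl)) ?_ h0
        (fun y hy => hb y ⟨hxs.1.trans hy.1, hy.2.le⟩) hL hε
        (by nlinarith [mul_le_mul_of_nonneg_left (by linarith [hxs.1] : b - xs ≤ b - a) hL])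
      intro y hy
      have hy' : y ∈ Icc a b := ⟨hxs.1.trans hy.1, hy.2.le⟩
      exact (hd y hy').mono_of_mem_nhdsWithin (Icc_mem_nhdsGE_of_mem ⟨hy'.1, hy.2⟩)
    have := key x ⟨hle, hx.2⟩
    rw [show |x - xs| = x - xs from abs_of_nonneg (by linarith)]
    exact this
  · have key : ∀ y ∈ Icc xs (2 * xs - a), |g (2 * xs - y)| ≤ 2 * ε * (y - xs) := by
      have hmaps : ∀ y ∈ Icc xs (2 * xs - a), (2 * xs - y) ∈ Icc a b := by
        intro y hy; exact ⟨by linarith [hy.2], by linarith [hy.1, hxs.2]⟩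
      apply gron_right' (g' := fun y => -(g' (2 * xs - y)))
        (hg.comp (by fun_prop) hmaps)
        ?_ (by show g (2 * xs - xs) = 0; rw [show 2 * xs - xs = xs by ring, h0])
        (fun y hy => by
          simpa [abs_neg] using hb (2 * xs - y) (hmaps y ⟨hy.1, hy.2.le⟩))
        hL hε
        (by nlinarith [mul_le_mul_of_nonneg_left (by linarith [hxs.2] : (2*xs - a) - xs ≤ b - a) hL])
      intro y hy
      have hy' : (2 * xs - y) ∈ Icc a b := hmaps y ⟨hy.1, hy.2.le⟩
      have hgd : HasDerivWithinAt g (g' (2 * xs - y)) (Iic (2 * xs - y)) (2 * xs - y) :=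
        (hd _ hy').mono_of_mem_nhdsWithin (Icc_mem_nhdsLE_of_mem ⟨by linarith [hy.2], hy'.2⟩)
      have hf : HasDerivWithinAt (fun z : ℝ => 2 * xs - z) (-1) (Ici y) y := by
        simpa using ((hasDerivAt_id y).const_sub (2 * xs)).hasDerivWithinAt (s := Ici y)
      have := hgd.comp y hf (fun z hz => by simp only [mem_Iic]; linarith [mem_Ici.mp hz])
      simpa [mul_comm] using this
    have := key (2 * xs - x) ⟨by linarith, by linarith [hx.1]⟩
    simp only [show 2 * xs - (2 * xs - x) = x by ring] at this
    rw [show |x - xs| = xs - x from by rw [abs_sub_comm]; exact abs_of_nonneg (by linarith)]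
    linarith [this]

lemma lip_aux' {γ M : ℝ} (hγ : 1 < γ) (hM : 1 ≤ M) {u v : ℝ} (hu : u ∈ Ici M) (hv : v ∈ Ici M) :
    |γ⁻¹ * u ^ (1 - γ) - γ⁻¹ * v ^ (1 - γ)| ≤ M⁻¹ * |u - v| := by
  have hM0 : (0:ℝ) < M := by linarith
  have key := Convex.norm_image_sub_le_of_norm_hasDerivWithin_le
    (f := fun w : ℝ => γ⁻¹ * w ^ (1 - γ))
    (f' := fun w : ℝ => γ⁻¹ * ((1 - γ) * w ^ (1 - γ - 1)))
    (s := Ici M) (C := M⁻¹) ?_ ?_ (convex_Ici M) hv hu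
  · simpa [Real.norm_eq_abs] using key
  · intro w hw
    have hw0 : (0:ℝ) < w := lt_of_lt_of_le hM0 hw
    exact ((Real.hasDerivAt_rpow_const (p := 1 - γ) (Or.inl hw0.ne')).const_mul γ⁻¹).hasDerivWithinAt
  · intro w hw
    have hw0 : (0:ℝ) < w := lt_of_lt_of_le hM0 hw
    have hγ0 : (0:ℝ) < γ := by linarith
    rw [Real.norm_eq_abs, abs_mul, abs_mul, abs_of_pos (inv_pos.2 hγ0),
      abs_of_nonneg (Real.rpow_nonneg hw0.le _), abs_of_nonpos (by linarith : 1 - γ ≤ 0)]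
    have h1 : γ⁻¹ * (γ - 1) ≤ 1 := by
      rw [inv_mul_le_iff₀ hγ0]; linarith
    have h2 : w ^ (1 - γ - 1) ≤ M⁻¹ := by
      have : w ^ (1 - γ - 1) ≤ M ^ (1 - γ - 1) := by
        rw [show (1 - γ - 1 : ℝ) = -γ by ring, Real.rpow_neg hM0.le, Real.rpow_neg hw0.le]
        apply inv_anti₀ (Real.rpow_pos_of_pos hM0 _)
        exact Real.rpow_le_rpow hM0.le hw hγ0.le
      refine this.trans ?_
      calc M ^ (1 - γ - 1) ≤ M ^ (-1 : ℝ) :=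
            Real.rpow_le_rpow_of_exponent_le hM (by linarith)
        _ = M⁻¹ := by rw [Real.rpow_neg_one]
    rw [← mul_assoc]
    calc γ⁻¹ * -(1 - γ) * w ^ (1 - γ - 1) ≤ 1 * M⁻¹ := by
          apply mul_le_mul (by rw [show -(1-γ) = γ - 1 by ring]; exact h1) h2
            (Real.rpow_nonneg hw0.le _) zero_le_one
      _ = M⁻¹ := one_mul _

lemma inv_form' {γ u : ℝ} (hu : 0 < u) : 1 / (γ * u ^ (γ - 1)) = γ⁻¹ * u ^ (1 - γ) := by
  rw [show (1 - γ : ℝ) = -(γ - 1) by ring, Real.rpow_neg hu.le]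
  rw [one_div, mul_inv]

lemma slope_lip' {A γ M x y₁ y₂ : ℝ} (hγ : 1 < γ) (hM : 1 ≤ M)
    (h1 : M ≤ y₁ - 2 * A * Real.cos x) (h2 : M ≤ y₂ - 2 * A * Real.cos x) :
    |slopeField A γ x y₁ - slopeField A γ x y₂| ≤ M⁻¹ * |y₁ - y₂| := by
  have hM0 : (0:ℝ) < M := by linarith
  have hu1 : (0:ℝ) < y₁ - 2 * A * Real.cos x := lt_of_lt_of_le hM0 h1
  have hu2 : (0:ℝ) < y₂ - 2 * A * Real.cos x := lt_of_lt_of_le hM0 h2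
  have : slopeField A γ x y₁ - slopeField A γ x y₂ =
      γ⁻¹ * (y₁ - 2 * A * Real.cos x) ^ (1 - γ) - γ⁻¹ * (y₂ - 2 * A * Real.cos x) ^ (1 - γ) := by
    simp only [slopeField, inv_form' hu1, inv_form' hu2]; ring
  rw [this]
  have := lip_aux' hγ hM (u := y₁ - 2 * A * Real.cos x) (v := y₂ - 2 * A * Real.cos x) h1 h2
  convert this using 2
  ring

lemma refPsi_hasDeriv' {A γ c x : ℝ} (hz : 0 < c + x) :
    HasDerivAt (refPsi A γ c) (-2 * A * Real.sin x + γ⁻¹ * (c + x) ^ (1 / γ - 1)) x := by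
  have h1 : HasDerivAt (fun x : ℝ => 2 * A * Real.cos x) (2 * A * -Real.sin x) x :=
    (Real.hasDerivAt_cos x).const_mul (2 * A)
  have h2 : HasDerivAt (fun x : ℝ => c + x) 1 x := (hasDerivAt_id x).const_add c
  have h3 : HasDerivAt (fun x : ℝ => (c + x) ^ (1 / γ))
      (1 * (1 / γ) * (c + x) ^ (1 / γ - 1)) x := h2.rpow_const (Or.inl hz.ne')
  have h := h1.add h3
  have hfun : refPsi A γ c = fun x : ℝ => 2 * A * Real.cos x + (c + x) ^ (1 / γ) := rfl
  rw [hfun]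
  exact h.congr_deriv (by rw [one_div]; ring)

lemma refPsi_slope' {A γ c x : ℝ} (hγ : 1 < γ) (hz : 0 < c + x) :
    slopeField A γ x (refPsi A γ c x) = -2 * A * Real.sin x + γ⁻¹ * (c + x) ^ (1 / γ - 1) := by
  have hγ0 : (0:ℝ) < γ := by linarith
  have hw : refPsi A γ c x - 2 * A * Real.cos x = (c + x) ^ (1 / γ) := by
    rw [refPsi]; ring
  rw [slopeField, hw, ← Real.rpow_mul hz.le,
    show (1 / γ * (γ - 1) : ℝ) = -(1 / γ - 1) by field_simp; ring,
    Real.rpow_neg hz.le]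
  rw [one_div, mul_inv, inv_inv]

lemma cx_pos' {A γ c a x M : ℝ} (hA : 0 < A) (hγ : 1 < γ) (hc : 0 < c)
    (hax : a ≤ x) (hM : |a| + 1 < M) (hbig : 2 * A + M ≤ refPsi A γ c x) : 0 < c + x := by
  by_contra h
  push_neg at h
  have hx0 : x ≤ -c := by linarith
  have habs : |c + x| ≤ |a| := by
    rw [abs_of_nonpos h]
    have hx : x < 0 := by linarith
    calc -(c + x) ≤ -x := by linarith
      _ ≤ -a := by linarith
      _ ≤ |a| := neg_le_abs a
  have hpow : (c + x) ^ (1 / γ) ≤ |a| + 1 := by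
    have h1 : (c + x) ^ (1 / γ) ≤ |(c + x) ^ (1 / γ)| := le_abs_self _
    have h2 : |(c + x) ^ (1 / γ)| ≤ |c + x| ^ (1 / γ) := Real.abs_rpow_le_abs_rpow _ _
    have h3 : |c + x| ^ (1 / γ) ≤ |a| + 1 := by
      rcases le_total (|c + x|) 1 with hle | hle
      · have := Real.rpow_le_one (abs_nonneg (c + x)) hle (by positivity : (0:ℝ) ≤ 1 / γ)
        have ha := abs_nonneg a
        linarith
      · have h4 : |c + x| ^ (1 / γ) ≤ |c + x| ^ (1 : ℝ) :=
          Real.rpow_le_rpow_of_exponent_le hle (by rw [div_le_one (by linarith)]; linarith)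
        rw [Real.rpow_one] at h4
        linarith
    linarith
  have hcos : 2 * A * Real.cos x ≤ 2 * A := by
    nlinarith [Real.cos_le_one x]
  rw [refPsi] at hbig
  linarith

/-- Standard curves are globally close to reference curves (Lemma `l_refclose`):
if `ψ` touches the reference curve `ψ̄` at `x*`, then, provided both curves lie high
enough (depending only on `A`, `γ` and the interval), the vertical distance between them
is bounded by `2·Δm·|x − x*|`, where `Δm = sup_I |ψ' − m₁(·, ψ(·))|`. -/
theorem standard_curve_close_to_reference_curve
    (A γ a b : ℝ) (hA : 0 < A) (hγ : 1 < γ) (hab : a < b) :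
    ∃ Y₀ : ℝ, ∀ c : ℝ, 0 < c → ∀ ψ : ℝ → ℝ, ∀ xs ∈ Icc a b,
      ContDiffOn ℝ (⊤ : ℕ∞) ψ (Icc a b) →
      (∀ x ∈ Icc a b, 0 < ψ x) →
      ψ xs = refPsi A γ c xs →
      (∀ x ∈ Icc a b, Y₀ ≤ min (ψ x) (refPsi A γ c x)) →
      ∀ x ∈ Icc a b,
        |ψ x - refPsi A γ c x| ≤
          2 * sSup ((fun t => |derivWithin ψ (Icc a b) t - slopeField A γ t (ψ t)|) ''
              Icc a b) * |x - xs| := by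
  set M : ℝ := max (b - a) 1 + |a| + 2 with hM_def
  have hM1 : 1 ≤ M := by
    have := le_max_right (b - a) 1
    have := abs_nonneg a
    simp only [hM_def]; linarith
  have hMba : b - a ≤ M := by
    have := le_max_left (b - a) 1
    have := abs_nonneg a
    simp only [hM_def]; linarith
  have hMa : |a| + 1 < M := by
    have := le_max_right (b - a) 1
    simp only [hM_def]; linarith
  have hM0 : (0:ℝ) < M := by linarith
  refine ⟨2 * A + M, fun c hc ψ xs hxs hψ hψpos htouch hmin x hx => ?_⟩
  -- basic facts
  have hcos : ∀ t : ℝ, 2 * A * Real.cos t ≤ 2 * A := fun t => by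
    nlinarith [Real.cos_le_one t]
  have hψY : ∀ t ∈ Icc a b, 2 * A + M ≤ ψ t := fun t ht =>
    le_trans (hmin t ht) (min_le_left _ _)
  have hrY : ∀ t ∈ Icc a b, 2 * A + M ≤ refPsi A γ c t := fun t ht =>
    le_trans (hmin t ht) (min_le_right _ _)
  have hcx : ∀ t ∈ Icc a b, 0 < c + t := fun t ht =>
    cx_pos' hA hγ hc ht.1 hMa (hrY t ht)
  -- the deviation Δm
  set Δm : ℝ := sSup ((fun t => |derivWithin ψ (Icc a b) t - slopeField A γ t (ψ t)|) ''
      Icc a b) with hΔ_def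
  have hudiff : UniqueDiffOn ℝ (Icc a b) := uniqueDiffOn_Icc hab
  have hu_lb : ∀ t ∈ Icc a b, M ≤ ψ t - 2 * A * Real.cos t := fun t ht => by
    have := hψY t ht; have := hcos t; linarith
  have hcont : ContinuousOn
      (fun t => |derivWithin ψ (Icc a b) t - slopeField A γ t (ψ t)|) (Icc a b) := by
    apply ContinuousOn.abs
    apply ContinuousOn.sub
    · exact hψ.continuousOn_derivWithin hudiff (by simp)
    · apply ContinuousOn.add
      · exact Continuous.continuousOn (by continuity)
      · apply ContinuousOn.div continuousOn_const
        · apply ContinuousOn.mul continuousOn_const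
          apply ContinuousOn.rpow_const
          · exact hψ.continuousOn.sub (Continuous.continuousOn (by continuity))
          · intro t ht
            left
            have := hu_lb t ht
            intro h0
            rw [h0] at this; linarith
        · intro t ht
          have h1 : (0:ℝ) < ψ t - 2 * A * Real.cos t := lt_of_lt_of_le hM0 (hu_lb t ht)
          have : (0:ℝ) < γ * (ψ t - 2 * A * Real.cos t) ^ (γ - 1) :=
            mul_pos (by linarith) (Real.rpow_pos_of_pos h1 _)
          exact this.ne'
  have hbdd : BddAbove ((fun t => |derivWithin ψ (Icc a b) t - slopeField A γ t (ψ t)|) ''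
      Icc a b) := (isCompact_Icc.image_of_continuousOn hcont).bddAbove
  have hΔ_ge : ∀ t ∈ Icc a b, |derivWithin ψ (Icc a b) t - slopeField A γ t (ψ t)| ≤ Δm :=
    fun t ht => le_csSup hbdd (mem_image_of_mem _ ht)
  have hΔ0 : 0 ≤ Δm := le_trans (abs_nonneg _) (hΔ_ge xs hxs)
  -- set up Gronwall
  set g : ℝ → ℝ := fun t => ψ t - refPsi A γ c t with hg_def
  set g' : ℝ → ℝ := fun t => derivWithin ψ (Icc a b) t - slopeField A γ t (refPsi A γ c t)
    with hg'_def
  have hrcont : ∀ t ∈ Icc a b, ContinuousAt (refPsi A γ c) t := fun t ht =>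
    (refPsi_hasDeriv' (hcx t ht)).continuousAt
  have hgcont : ContinuousOn g (Icc a b) :=
    hψ.continuousOn.sub (fun t ht => (hrcont t ht).continuousWithinAt)
  have hgd : ∀ t ∈ Icc a b, HasDerivWithinAt g (g' t) (Icc a b) t := by
    intro t ht
    have h1 : HasDerivWithinAt ψ (derivWithin ψ (Icc a b) t) (Icc a b) t :=
      ((hψ.differentiableOn (by simp)) t ht).hasDerivWithinAt
    have h2 : HasDerivWithinAt (refPsi A γ c) (slopeField A γ t (refPsi A γ c t)) (Icc a b) t := by
      rw [refPsi_slope' hγ (hcx t ht)]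
      exact (refPsi_hasDeriv' (hcx t ht)).hasDerivWithinAt
    exact h1.sub h2
  have hgb : ∀ t ∈ Icc a b, |g' t| ≤ M⁻¹ * |g t| + Δm := by
    intro t ht
    have htri : |g' t| ≤ |derivWithin ψ (Icc a b) t - slopeField A γ t (ψ t)| +
        |slopeField A γ t (ψ t) - slopeField A γ t (refPsi A γ c t)| := by
      simpa [hg'_def] using
        abs_sub_le (derivWithin ψ (Icc a b) t) (slopeField A γ t (ψ t))
          (slopeField A γ t (refPsi A γ c t))
    have hlip : |slopeField A γ t (ψ t) - slopeField A γ t (refPsi A γ c t)| ≤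
        M⁻¹ * |ψ t - refPsi A γ c t| := by
      apply slope_lip' hγ hM1
      · exact hu_lb t ht
      · have := hrY t ht; have := hcos t; linarith
    have := hΔ_ge t ht
    calc |g' t| ≤ |derivWithin ψ (Icc a b) t - slopeField A γ t (ψ t)| +
          |slopeField A γ t (ψ t) - slopeField A γ t (refPsi A γ c t)| := htri
      _ ≤ Δm + M⁻¹ * |ψ t - refPsi A γ c t| := add_le_add this hlip
      _ = M⁻¹ * |g t| + Δm := by rw [hg_def]; ring
  have h0 : g xs = 0 := by rw [hg_def]; simp [htouch]
  have hLt : M⁻¹ * (b - a) ≤ 1 := by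
    rw [← inv_mul_cancel₀ hM0.ne']
    exact mul_le_mul_of_nonneg_left hMba (inv_nonneg.2 hM0.le)
  have := gron_two_sided' hxs hgcont hgd h0 hgb (inv_nonneg.2 hM0.le) hΔ0 hLt x hx
  calc |ψ x - refPsi A γ c x| = |g x| := rfl
    _ ≤ 2 * Δm * |x - xs| := this
    _ = 2 * Δm * |x - xs| := rfl

end
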